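/- Let (G_i, Ŵ_i), i ∈ ℕ, be i.i.d. random pairs on a probability space with G_i ∈ {A, B}, P(G_i = A) = p_A ∈ (0,1), and such that, conditionally on G_i = G, the estimate Ŵ_i is Gaussian with mean μ_G − β_G and variance σ̂_G² (σ̂_G > 0). Fix α ∈ (0,1). For each n, let S_n ⊆ {1, …, n} be the set of indices of the ⌊αn⌋ largest values among Ŵ_1, …, Ŵ_n (ties broken by smallest index). Then the fraction of selected A-candidates among all A-candidates, #{i ∈ S_n : G_i = A} / max(1, #{i ≤ n : G_i = A}), converges in probability, as n → ∞, to the deterministic limit x^obl := 1 − Φ((θ − μ_A + β_A)/σ̂_A), where θ is the unique real number satisfying p_A·(1 − Φ((θ − μ_A + β_A)/σ̂_A)) + (1 − p_A)·(1 − Φ((θ − μ_B + β_B)/σ̂_B)) = α. -/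

import Mathlib

noncomputable def gpdf (t : ℝ) : ℝ := Real.exp (-t ^ 2 / 2) / Real.sqrt (2 * Real.pi)

noncomputable def gcdf (x : ℝ) : ℝ := ∫ t in Set.Iic x, gpdf t

noncomputable def gquant : ℝ → ℝ := Function.invFun gcdf

noncomputable def sHat (η σ : ℝ) : ℝ := Real.sqrt (η ^ 2 + σ ^ 2)

noncomputable def sTil (η σ : ℝ) : ℝ := η ^ 2 / sHat η σ

def Dset (pA α : ℝ) : Set ℝ :=
  {x | x ∈ Set.Ioo (0:ℝ) 1 ∧ (α - pA * x) / (1 - pA) ∈ Set.Ioo (0:ℝ) 1}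

noncomputable def Qfun (pA α μA μB sA sB x : ℝ) : ℝ :=
  (1 / α) * (pA * (μA * x + sA * gpdf (gquant (1 - x)))
    + (1 - pA) * (μB * ((α - pA * x) / (1 - pA))
      + sB * gpdf (gquant (1 - (α - pA * x) / (1 - pA)))))

noncomputable def clampTo (lo hi x : ℝ) : ℝ := min hi (max lo x)


open scoped Classical

/-- Rank (from the top, ties broken by smallest index) of candidate `i` among the
first `n` candidates according to the estimates `W · ω`. -/
noncomputable def rankIn {Ω : Type*} (W : ℕ → Ω → ℝ) (n i : ℕ) (ω : Ω) : ℕ :=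
  ((Finset.range n).filter (fun j => W i ω < W j ω ∨ (W j ω = W i ω ∧ j ≤ i))).card

/-- Fraction of selected `A`-candidates (those with `G i ω = true`) among all
`A`-candidates, when the `⌊α·n⌋` candidates with the largest estimates are selected. -/
noncomputable def selAFrac {Ω : Type*} (G : ℕ → Ω → Bool) (W : ℕ → Ω → ℝ)
    (α : ℝ) (n : ℕ) (ω : Ω) : ℝ :=
  (((Finset.range n).filter (fun i => G i ω = true ∧ rankIn W n i ω ≤ ⌊α * n⌋₊)).card : ℝ)
    / max 1 (((Finset.range n).filter (fun i => G i ω = true)).card : ℝ)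

/-!
By the strong law of large numbers, almost surely the empirical frequencies of the events
`{G = A}`, `{G = A, Ŵ ≤ t}` and `{G = B, Ŵ ≤ t}` converge for every rational `t`. Hence the
fraction of candidates with estimate above `t` tends to
`F t = 1 - p_A Φ_A(t) - (1 - p_A) Φ_B(t)`, which is strictly decreasing with `F θ = α`.
For `s < t < θ < u`, eventually at most `⌊αn⌋` candidates lie above `u` and at least `⌊αn⌋`
above `t`, so every `A`-candidate above `u` is selected and every selected one lies above `s`.
The selected fraction of `A` is thus squeezed between the empirical fractions of `A` above `u`
and above `s`, which tend to `1 - Φ_A(u)` and `1 - Φ_A(s)`; continuity of `Φ_A` at `θ` gives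
almost sure convergence, hence convergence in probability.
-/

open MeasureTheory ProbabilityTheory Filter Topology Finset

lemma gpdf_pos (t : ℝ) : 0 < gpdf t := by unfold gpdf; positivity

lemma integrable_gpdf : Integrable gpdf := by
  refine ((integrable_exp_neg_mul_sq (by norm_num : (0:ℝ) < 1 / 2)).div_const
    (Real.sqrt (2 * Real.pi))).congr (.of_forall fun t => ?_)
  unfold gpdf; ring_nf

lemma gcdf_sub_gcdf (a b : ℝ) : gcdf b - gcdf a = ∫ t in a..b, gpdf t :=
  intervalIntegral.integral_Iic_sub_Iic integrable_gpdf.integrableOn integrable_gpdf.integrableOn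

lemma gcdf_nonneg (x : ℝ) : 0 ≤ gcdf x :=
  setIntegral_nonneg measurableSet_Iic fun t _ => (gpdf_pos t).le

lemma gcdf_strictMono : StrictMono gcdf := fun a b hab => by
  have := intervalIntegral.intervalIntegral_pos_of_pos_on
    integrable_gpdf.intervalIntegrable (fun t _ => gpdf_pos t) hab
  linarith [gcdf_sub_gcdf a b]

lemma continuous_gcdf : Continuous gcdf := by
  have h : gcdf = fun x => gcdf 0 + ∫ t in (0:ℝ)..x, gpdf t := by
    funext x; rw [← gcdf_sub_gcdf]; ring
  rw [h]
  exact continuous_const.add (integrable_gpdf.continuous_primitive 0)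

lemma strictMono_gcdf_div {s : ℝ} (hs : 0 < s) (m : ℝ) :
    StrictMono fun t => gcdf ((t - m) / s) :=
  gcdf_strictMono.comp fun _ _ h => div_lt_div_of_pos_right (sub_lt_sub_right h m) hs

section Selection

variable {Ω : Type*} (W : ℕ → Ω → ℝ) (ω : Ω) {n k : ℕ} {s t : ℝ}

lemma rankIn_le_of_card_lt_le {i : ℕ} (hi : t < W i ω)
    (hk : #{j ∈ range n | t < W j ω} ≤ k) : rankIn W n i ω ≤ k := by
  refine le_trans (card_le_card fun j hj => ?_) hk
  simp only [mem_filter] at hj ⊢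
  obtain ⟨hj, h | ⟨h, -⟩⟩ := hj
  · exact ⟨hj, hi.trans h⟩
  · exact ⟨hj, h ▸ hi⟩

lemma le_of_rankIn_le {i : ℕ} (hi : i < n) (hr : rankIn W n i ω ≤ k)
    (hk : k ≤ #{j ∈ range n | t < W j ω}) : t ≤ W i ω := by
  by_contra! hlt
  have hsub : insert i {j ∈ range n | t < W j ω} ⊆
      {j ∈ range n | W i ω < W j ω ∨ (W j ω = W i ω ∧ j ≤ i)} := by
    intro j hj
    rcases mem_insert.1 hj with rfl | hj
    · exact mem_filter.2 ⟨mem_range.2 hi, Or.inr ⟨rfl, le_rfl⟩⟩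
    · simp only [mem_filter] at hj ⊢
      exact ⟨hj.1, Or.inl (hlt.trans hj.2)⟩
  have hnot : i ∉ {j ∈ range n | t < W j ω} := by simp [hlt.le]
  have := card_le_card hsub
  rw [card_insert_of_notMem hnot] at this
  unfold rankIn at hr
  omega

variable (P : ℕ → Prop) [DecidablePred P]

lemma card_above_le_card_selected (hk : #{j ∈ range n | t < W j ω} ≤ k) :
    #{i ∈ range n | P i ∧ t < W i ω} ≤ #{i ∈ range n | P i ∧ rankIn W n i ω ≤ k} :=
  card_le_card <| monotone_filter_right _ fun _ _ hi => ⟨hi.1, rankIn_le_of_card_lt_le W ω hi.2 hk⟩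

lemma card_selected_le_card_above (hst : s < t) (hk : k ≤ #{j ∈ range n | t < W j ω}) :
    #{i ∈ range n | P i ∧ rankIn W n i ω ≤ k} ≤ #{i ∈ range n | P i ∧ s < W i ω} := by
  refine card_le_card fun i hi => ?_
  simp only [mem_filter, mem_range] at hi ⊢
  exact ⟨hi.1, hi.2.1, hst.trans_le (le_of_rankIn_le W ω hi.1 hi.2.2 hk)⟩

end Selection

lemma exists_rat_gt_of_eventually_nhds {P : ℝ → Prop} {x : ℝ} (h : ∀ᶠ t in 𝓝 x, P t) :
    ∃ q : ℚ, x < q ∧ P q := by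
  obtain ⟨l, u, hx, hsub⟩ := mem_nhds_iff_exists_Ioo_subset.1 h
  obtain ⟨q, hxq, hqu⟩ := exists_rat_btwn hx.2
  exact ⟨q, hxq, hsub ⟨hx.1.trans hxq, hqu⟩⟩

lemma exists_rat_lt_of_eventually_nhds {P : ℝ → Prop} {x : ℝ} (h : ∀ᶠ t in 𝓝 x, P t) :
    ∃ q : ℚ, q < x ∧ P q := by
  obtain ⟨l, u, hx, hsub⟩ := mem_nhds_iff_exists_Ioo_subset.1 h
  obtain ⟨q, hlq, hqx⟩ := exists_rat_btwn hx.1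
  exact ⟨q, hqx, hsub ⟨hlq, hqx.trans hx.2⟩⟩

lemma eventually_le_of_tendsto_div {a b : ℕ → ℕ} {x y : ℝ}
    (ha : Tendsto (fun n => (a n : ℝ) / n) atTop (𝓝 x))
    (hb : Tendsto (fun n => (b n : ℝ) / n) atTop (𝓝 y)) (hxy : x < y) :
    ∀ᶠ n in atTop, a n ≤ b n := by
  filter_upwards [ha.eventually_lt hb hxy, eventually_gt_atTop 0] with n h hn
  exact_mod_cast ((div_lt_div_iff_of_pos_right (by positivity)).1 h).le

lemma tendsto_div_max_one_of_tendsto_div {a b : ℕ → ℕ} {x y : ℝ}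
    (ha : Tendsto (fun n => (a n : ℝ) / n) atTop (𝓝 x))
    (hb : Tendsto (fun n => (b n : ℝ) / n) atTop (𝓝 y)) (hy : y ≠ 0) :
    Tendsto (fun n => (a n : ℝ) / max 1 (b n : ℝ)) atTop (𝓝 (x / y)) := by
  refine (ha.div hb hy).congr' ?_
  filter_upwards [hb.eventually_ne hy] with n hn
  have hbn : (b n : ℝ) ≠ 0 := fun h => hn (by simp [h])
  have hn0 : (n : ℝ) ≠ 0 := fun h => hn (by simp [h])
  rw [max_eq_right (by exact_mod_cast Nat.one_le_iff_ne_zero.2 (by exact_mod_cast hbn))]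
  simp only [Pi.div_apply]
  field_simp

section Frequencies

variable {Ω : Type*} (G : ℕ → Ω → Bool) (W : ℕ → Ω → ℝ) (ω : Ω) (t : ℝ)

lemma card_lt_add_card_and_le_add_card_and_le (n : ℕ) :
    #{i ∈ range n | t < W i ω} + #{i ∈ range n | G i ω = true ∧ W i ω ≤ t}
      + #{i ∈ range n | G i ω = false ∧ W i ω ≤ t} = n := by
  simp only [card_filter, ← sum_add_distrib]
  conv_rhs => rw [← card_range n, card_eq_sum_ones]
  refine sum_congr rfl fun i _ => ?_
  cases G i ω <;> by_cases h : t < W i ω <;> simp [h]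

lemma card_and_lt_add_card_and_le (n : ℕ) :
    #{i ∈ range n | G i ω = true ∧ t < W i ω} + #{i ∈ range n | G i ω = true ∧ W i ω ≤ t}
      = #{i ∈ range n | G i ω = true} := by
  simp only [card_filter, ← sum_add_distrib]
  refine sum_congr rfl fun i _ => ?_
  cases G i ω <;> by_cases h : t < W i ω <;> simp [h]

end Frequencies

section SelectionLimit

variable {Ω : Type*} {G : ℕ → Ω → Bool} {W : ℕ → Ω → ℝ} {ω : Ω} {t pA a b : ℝ}

lemma tendsto_card_lt_div
    (hA : Tendsto (fun n : ℕ => (#{i ∈ range n | G i ω = true ∧ W i ω ≤ t} : ℝ) / n)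
      atTop (𝓝 a))
    (hB : Tendsto (fun n : ℕ => (#{i ∈ range n | G i ω = false ∧ W i ω ≤ t} : ℝ) / n)
      atTop (𝓝 b)) :
    Tendsto (fun n : ℕ => (#{i ∈ range n | t < W i ω} : ℝ) / n) atTop (𝓝 (1 - a - b)) := by
  refine ((tendsto_const_nhds.sub hA).sub hB).congr' ?_
  filter_upwards [eventually_gt_atTop 0] with n hn
  have h : (#{i ∈ range n | t < W i ω} : ℝ) + #{i ∈ range n | G i ω = true ∧ W i ω ≤ t}
      + #{i ∈ range n | G i ω = false ∧ W i ω ≤ t} = n := by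
    exact_mod_cast card_lt_add_card_and_le_add_card_and_le G W ω t n
  field_simp
  linarith

lemma tendsto_card_and_lt_div_max_one
    (hG : Tendsto (fun n : ℕ => (#{i ∈ range n | G i ω = true} : ℝ) / n) atTop (𝓝 pA))
    (hpA : pA ≠ 0)
    (hA : Tendsto (fun n : ℕ => (#{i ∈ range n | G i ω = true ∧ W i ω ≤ t} : ℝ) / n)
      atTop (𝓝 (pA * a))) :
    Tendsto (fun n : ℕ => (#{i ∈ range n | G i ω = true ∧ t < W i ω} : ℝ)
      / max 1 (#{i ∈ range n | G i ω = true} : ℝ)) atTop (𝓝 (1 - a)) := by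
  have hlt : Tendsto (fun n : ℕ => (#{i ∈ range n | G i ω = true ∧ t < W i ω} : ℝ) / n)
      atTop (𝓝 (pA - pA * a)) := by
    refine (hG.sub hA).congr fun n => ?_
    rw [← card_and_lt_add_card_and_le G W ω t n, Nat.cast_add, add_div, add_sub_cancel_right]
  convert tendsto_div_max_one_of_tendsto_div hlt hG hpA using 2
  field_simp

theorem tendsto_selAFrac_of_frequencies {α θ : ℝ} {FA FB : ℝ → ℝ}
    (hpA : pA ∈ Set.Ioo 0 1) (hα : 0 ≤ α) (hFA : StrictMono FA) (hFAθ : ContinuousAt FA θ)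
    (hFB : Monotone FB) (hθ : pA * (1 - FA θ) + (1 - pA) * (1 - FB θ) = α)
    (hG : Tendsto (fun n : ℕ => (#{i ∈ range n | G i ω = true} : ℝ) / n) atTop (𝓝 pA))
    (hA : ∀ q : ℚ, Tendsto (fun n : ℕ => (#{i ∈ range n | G i ω = true ∧ W i ω ≤ q} : ℝ) / n)
      atTop (𝓝 (pA * FA q)))
    (hB : ∀ q : ℚ, Tendsto (fun n : ℕ => (#{i ∈ range n | G i ω = false ∧ W i ω ≤ q} : ℝ) / n)
      atTop (𝓝 ((1 - pA) * FB q))) :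
    Tendsto (fun n => selAFrac G W α n ω) atTop (𝓝 (1 - FA θ)) := by
  obtain ⟨hpA0, hpA1⟩ := hpA
  have hk : Tendsto (fun n : ℕ => (⌊α * n⌋₊ : ℝ) / n) atTop (𝓝 α) :=
    (tendsto_nat_floor_mul_div_atTop hα).comp tendsto_natCast_atTop_atTop
  have habove (q : ℚ) := tendsto_card_lt_div (hA q) (hB q)
  have hselA (q : ℚ) := tendsto_card_and_lt_div_max_one hG hpA0.ne' (hA q)
  have hden (n : ℕ) : (0 : ℝ) ≤ max 1 (#{i ∈ range n | G i ω = true} : ℝ) := by positivity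
  refine tendsto_order.2 ⟨fun c hc => ?_, fun c hc => ?_⟩
  · obtain ⟨t, hθt, hct⟩ := exists_rat_gt_of_eventually_nhds
      (hFAθ.eventually (gt_mem_nhds (show FA θ < 1 - c by linarith)))
    have hαt : 1 - pA * FA t - (1 - pA) * FB t < α := by
      nlinarith [hFA hθt, hFB hθt.le]
    filter_upwards [eventually_le_of_tendsto_div (habove t) hk hαt,
      (hselA t).eventually (lt_mem_nhds (show c < 1 - FA t by linarith))] with n hn hcn
    refine hcn.trans_le (div_le_div_of_nonneg_right ?_ (hden n))
    exact_mod_cast card_above_le_card_selected W ω (G · ω = true) hn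
  · obtain ⟨s, hsθ, hcs⟩ := exists_rat_lt_of_eventually_nhds
      (hFAθ.eventually (lt_mem_nhds (show 1 - c < FA θ by linarith)))
    obtain ⟨t, hst, htθ⟩ := exists_rat_btwn hsθ
    have hαt : α < 1 - pA * FA t - (1 - pA) * FB t := by
      nlinarith [hFA htθ, hFB htθ.le]
    filter_upwards [eventually_le_of_tendsto_div hk (habove t) hαt,
      (hselA s).eventually (gt_mem_nhds (show 1 - FA s < c by linarith))] with n hn hcn
    refine lt_of_le_of_lt (div_le_div_of_nonneg_right ?_ (hden n)) hcn
    exact_mod_cast card_selected_le_card_above W ω (G · ω = true) hst hn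

end SelectionLimit

lemma ae_tendsto_card_filter_div {Ω E : Type*} [MeasurableSpace Ω] [MeasurableSpace E]
    {μ : Measure Ω} [IsFiniteMeasure μ] {X : ℕ → Ω → E} (hX : Measurable (X 0))
    (hindep : iIndepFun X μ) (hident : ∀ i, IdentDistrib (X i) (X 0) μ μ)
    (p : E → Prop) [DecidablePred p] (hp : MeasurableSet {x | p x}) :
    ∀ᵐ ω ∂μ, Tendsto (fun n : ℕ => (#{i ∈ range n | p (X i ω)} : ℝ) / n)
      atTop (𝓝 (μ.real {ω | p (X 0 ω)})) := by
  set f : E → ℝ := Set.indicator {x | p x} 1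
  have hf : Measurable f := measurable_one.indicator hp
  have hfX : f ∘ X 0 = (X 0 ⁻¹' {x | p x}).indicator 1 := by
    ext ω; simp [f, Set.indicator_apply]
  have hmean : μ[f ∘ X 0] = μ.real {ω | p (X 0 ω)} := by
    rw [hfX]; exact integral_indicator_one (hX hp)
  have hint : Integrable (f ∘ X 0) μ := by
    rw [hfX]; exact (integrable_const 1).indicator (hX hp)
  filter_upwards [strong_law_ae (fun i => f ∘ X i) hint
    (fun i j hij => (hindep.comp (fun _ => f) fun _ => hf).indepFun hij)
    (fun i => (hident i).comp hf)] with ω hω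
  rw [← hmean]
  refine hω.congr fun n => ?_
  simp [f, Set.indicator_apply, sum_boole, div_eq_inv_mul]

lemma measurable_card_filter {Ω ι : Type*} [MeasurableSpace Ω] (s : Finset ι)
    (P : ι → Ω → Prop) [∀ i ω, Decidable (P i ω)] (hP : ∀ i, MeasurableSet {ω | P i ω}) :
    Measurable fun ω => #{i ∈ s | P i ω} := by
  simp only [card_filter]
  exact Finset.measurable_sum _ fun i _ => Measurable.ite (hP i) measurable_const measurable_const

lemma measurable_rankIn {Ω : Type*} [MeasurableSpace Ω] {W : ℕ → Ω → ℝ}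
    (hW : ∀ i, Measurable (W i)) (n i : ℕ) : Measurable (rankIn W n i) :=
  measurable_card_filter _ _ fun j =>
    (measurableSet_lt (hW i) (hW j)).union
      ((measurableSet_eq_fun (hW j) (hW i)).inter (MeasurableSet.const _))

lemma measurable_selAFrac {Ω : Type*} [MeasurableSpace Ω] {G : ℕ → Ω → Bool}
    {W : ℕ → Ω → ℝ} (hG : ∀ i, Measurable (G i)) (hW : ∀ i, Measurable (W i)) (α : ℝ) (n : ℕ) :
    Measurable (selAFrac G W α n) := by
  have hA (i : ℕ) : MeasurableSet {ω | G i ω = true} := hG i (measurableSet_singleton true)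
  have hsel := measurable_card_filter (range n)
    (fun i ω => G i ω = true ∧ rankIn W n i ω ≤ ⌊α * n⌋₊)
    fun i => (hA i).inter (measurableSet_le (measurable_rankIn hW n i) measurable_const)
  have hcardA := measurable_card_filter (range n) (fun i ω => G i ω = true) hA
  exact (measurable_from_nat.comp hsel).div
    (measurable_const.max (measurable_from_nat.comp hcardA))

/-- law of large numbers for the group-oblivious selection — the
fraction of selected `A`-candidates converges in probability to the deterministic
limit `x^obl = 1 − Φ((θ − μ_A + β_A)/σ̂_A)`. -/
theorem stmt15 {Ω : Type*} [MeasureTheory.MeasureSpace Ω]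
    [MeasureTheory.IsProbabilityMeasure (MeasureTheory.volume : MeasureTheory.Measure Ω)]
    (G : ℕ → Ω → Bool) (W : ℕ → Ω → ℝ)
    (pA α μA μB βA βB shA shB θ : ℝ)
    (hpA : pA ∈ Set.Ioo (0:ℝ) 1) (hα : α ∈ Set.Ioo (0:ℝ) 1)
    (hshA : 0 < shA) (hshB : 0 < shB)
    (hmeas : ∀ i, Measurable (fun ω => (G i ω, W i ω)))
    (hident : ∀ i, MeasureTheory.Measure.map (fun ω => (G i ω, W i ω)) MeasureTheory.volume
        = MeasureTheory.Measure.map (fun ω => (G 0 ω, W 0 ω)) MeasureTheory.volume)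
    (hindep : ProbabilityTheory.iIndepFun
        (fun i ω => (G i ω, W i ω)) MeasureTheory.volume)
    (hGA : ∀ i, MeasureTheory.volume {ω | G i ω = true} = ENNReal.ofReal pA)
    (hcondA : ∀ i x, MeasureTheory.volume {ω | G i ω = true ∧ W i ω ≤ x}
        = ENNReal.ofReal (pA * gcdf ((x - (μA - βA)) / shA)))
    (hcondB : ∀ i x, MeasureTheory.volume {ω | G i ω = false ∧ W i ω ≤ x}
        = ENNReal.ofReal ((1 - pA) * gcdf ((x - (μB - βB)) / shB)))
    (hθ : pA * (1 - gcdf ((θ - μA + βA) / shA))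
        + (1 - pA) * (1 - gcdf ((θ - μB + βB) / shB)) = α) :
    ∀ ε > (0:ℝ),
      Filter.Tendsto
        (fun n => MeasureTheory.volume
          {ω | ε ≤ |selAFrac G W α n ω - (1 - gcdf ((θ - μA + βA) / shA))|})
        Filter.atTop (nhds 0) := by
  have hlln := ae_tendsto_card_filter_div (hmeas 0) hindep
    fun i => ⟨(hmeas i).aemeasurable, (hmeas 0).aemeasurable, hident i⟩
  have hfreqG := hlln (·.1 = true) (measurable_fst (measurableSet_singleton true))
  rw [measureReal_def, hGA 0, ENNReal.toReal_ofReal hpA.1.le] at hfreqG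
  have hfreqA : ∀ᵐ ω, ∀ q : ℚ, Tendsto
      (fun n : ℕ => (#{i ∈ range n | G i ω = true ∧ W i ω ≤ q} : ℝ) / n)
      atTop (𝓝 (pA * gcdf ((q - (μA - βA)) / shA))) := ae_all_iff.2 fun q => by
    have h := hlln (fun x => x.1 = true ∧ x.2 ≤ q)
      ((measurable_fst (measurableSet_singleton true)).inter (measurable_snd measurableSet_Iic))
    rwa [measureReal_def, hcondA 0, ENNReal.toReal_ofReal (mul_nonneg hpA.1.le (gcdf_nonneg _))]
      at h
  have hfreqB : ∀ᵐ ω, ∀ q : ℚ, Tendsto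
      (fun n : ℕ => (#{i ∈ range n | G i ω = false ∧ W i ω ≤ q} : ℝ) / n)
      atTop (𝓝 ((1 - pA) * gcdf ((q - (μB - βB)) / shB))) := ae_all_iff.2 fun q => by
    have h := hlln (fun x => x.1 = false ∧ x.2 ≤ q)
      ((measurable_fst (measurableSet_singleton false)).inter (measurable_snd measurableSet_Iic))
    rwa [measureReal_def, hcondB 0,
      ENNReal.toReal_ofReal (mul_nonneg (sub_nonneg.2 hpA.2.le) (gcdf_nonneg _))] at h
  rw [sub_add, sub_add] at hθ
  have hae : ∀ᵐ ω, Tendsto (fun n => selAFrac G W α n ω) atTop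
      (𝓝 (1 - gcdf ((θ - (μA - βA)) / shA))) := by
    filter_upwards [hfreqG, hfreqA, hfreqB] with ω hG hA hB
    exact tendsto_selAFrac_of_frequencies (FA := fun t => gcdf ((t - (μA - βA)) / shA))
      (FB := fun t => gcdf ((t - (μB - βB)) / shB)) hpA hα.1.le (strictMono_gcdf_div hshA _)
      (continuous_gcdf.comp (by fun_prop)).continuousAt (strictMono_gcdf_div hshB _).monotone
      hθ hG hA hB
  have hsel (n : ℕ) : Measurable (selAFrac G W α n) := measurable_selAFrac (fun i => measurable_fst.comp (hmeas i))
    (fun i => measurable_snd.comp (hmeas i)) α n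
  intro ε hε
  simpa only [sub_add, Real.dist_eq] using tendstoInMeasure_iff_dist.1
    (tendstoInMeasure_of_tendsto_ae (fun n => (hsel n).aestronglyMeasurable) hae) ε hε
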